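/- arXiv:2103.15919 — 5 statements merged into one kernel-verified Lean document; each statement's English description precedes it below -/
import Mathlib

section
/- Let λ > 0, let d₁,…,d_K ∈ ℝ^p, and let F₁,…,F_L be symmetric positive semidefinite real p×p matrices. The structured sparse kernel k(β) = exp(−λ(∑_{k=1}^K |dₖᵀβ| + ∑_{ℓ=1}^L √(βᵀ F_ℓ β))) is Lebesgue-integrable over ℝ^p if and only if the stacked (K+Lp)×p matrix D̄, whose rows are d₁ᵀ,…,d_Kᵀ followed by the rows of F₁,…,F_L, has rank p (full column rank). -/
/-!
The exponent `structuredPenalty d F` is continuous, absolutely homogeneous, and vanishes exactly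
on the kernel of the stacked matrix `D̄` (for a positive semidefinite `F`, `βᵀFβ = 0` forces
`Fβ = 0`). If `D̄` is injective, compactness of the unit sphere gives `penalty β ≥ c‖β‖` with
`c > 0`, and `exp (-λc‖β‖)` is integrable. Otherwise the integrand is invariant under
translation by a nonzero `v ∈ ker D̄`; being continuous and positive, it then stays above a
positive constant on infinitely many disjoint balls of equal measure, so it is not integrable.
-/

open MeasureTheory Matrix

open Metric Set in
theorem not_integrable_of_forall_add_smul_eq {E : Type*} [NormedAddCommGroup E]
    [NormedSpace ℝ E] [MeasurableSpace E] [BorelSpace E] (μ : Measure E) [μ.IsAddHaarMeasure]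
    {f : E → ℝ} (hf : ContinuousAt f 0) (hf0 : f 0 ≠ 0) {v : E} (hv : v ≠ 0)
    (hinv : ∀ x (t : ℝ), f (x + t • v) = f x) : ¬ Integrable f μ := by
  intro hint
  set ε := ‖f 0‖ / 2
  have hε : 0 < ε := by positivity
  obtain ⟨r, hr, hball⟩ : ∃ r > 0, ∀ y ∈ ball 0 r, ε ≤ ‖f y‖ :=
    eventually_nhds_iff_ball.1 (hf.norm.eventually (le_mem_nhds (half_lt_self (by positivity))))
  set w : E := (2 * r / ‖v‖) • v
  have hw : ‖w‖ = 2 * r := by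
    rw [norm_smul, Real.norm_eq_abs, abs_div, abs_norm, abs_of_pos (by positivity : 0 < 2 * r),
      div_mul_cancel₀ _ (norm_ne_zero_iff.mpr hv)]
  set u : ℕ → E := fun n => (n : ℝ) • w
  have hu : ∀ n, u n = ((n : ℝ) * (2 * r / ‖v‖)) • v := fun n => by simp only [u, w, smul_smul]
  have hsub : (⋃ n, ball (u n) r) ⊆ {x | ε ≤ ‖f x‖} := by
    refine iUnion_subset fun n y hy => ?_
    rw [mem_ofPred_eq, ← sub_add_cancel y (u n), hu n, hinv]
    exact hball _ (by rwa [mem_ball_zero_iff, ← dist_eq_norm, ← hu n])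
  have hdisj : Pairwise fun m n => Disjoint (ball (u m) r) (ball (u n) r) := by
    intro m n hmn
    have h1 : (1 : ℝ) ≤ |(m : ℝ) - n| := by
      exact_mod_cast Int.one_le_abs (sub_ne_zero.mpr (Int.ofNat_inj.not.mpr hmn))
    apply ball_disjoint_ball
    rw [dist_eq_norm, ← sub_smul, norm_smul, hw, Real.norm_eq_abs]
    nlinarith
  have hunion : μ (⋃ n, ball (u n) r) = ⊤ := by
    rw [measure_iUnion hdisj fun _ => measurableSet_ball]
    simp only [Measure.addHaar_ball_center]
    exact ENNReal.tsum_const_eq_top_of_ne_zero (measure_ball_pos μ 0 hr).ne'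
  exact (hint.measure_norm_ge_lt_top hε).ne (top_unique (hunion ▸ measure_mono hsub))

theorem integrable_exp_neg_mul_norm {E : Type*} [NormedAddCommGroup E] [NormedSpace ℝ E]
    [FiniteDimensional ℝ E] [MeasurableSpace E] [BorelSpace E] (μ : Measure E)
    [μ.IsAddHaarMeasure] {b : ℝ} (hb : 0 < b) :
    Integrable (fun x => Real.exp (-(b * ‖x‖))) μ := by
  -- compare with the integrable polynomial decay `(1 + ‖x‖) ^ (-(dim E + 1))`
  set n := Module.finrank ℝ E + 1
  have hdecay : ∀ t : ℝ, 0 ≤ t →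
      Real.exp (-(b * t)) ≤ Real.exp b * n.factorial / b ^ n * (1 + t) ^ (-(n : ℝ)) := by
    intro t ht
    have h := Real.pow_div_factorial_le_exp (x := b * (1 + t)) (by positivity) n
    rw [mul_pow, div_le_iff₀ (by positivity), mul_add, mul_one, Real.exp_add] at h
    rw [Real.rpow_neg (by positivity), Real.rpow_natCast, Real.exp_neg]
    field_simp
    nlinarith [Real.exp_pos b, Real.exp_pos (b * t)]
  refine ((integrable_one_add_norm (μ := μ) (r := n) (by simp [n])).const_mul
    (Real.exp b * n.factorial / b ^ n)).mono' (by fun_prop)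
    (Filter.Eventually.of_forall fun x => ?_)
  rw [Real.norm_of_nonneg (Real.exp_pos _).le]
  exact hdecay _ (norm_nonneg x)

theorem exists_pos_mul_norm_le_of_homogeneous {E : Type*} [NormedAddCommGroup E]
    [NormedSpace ℝ E] [FiniteDimensional ℝ E] {f : E → ℝ} (hf : Continuous f)
    (hsmul : ∀ (t : ℝ) x, f (t • x) = |t| * f x) (hpos : ∀ x, x ≠ 0 → 0 < f x) :
    ∃ c > 0, ∀ x, c * ‖x‖ ≤ f x := by
  obtain ⟨c, hc, hle⟩ := (isCompact_sphere (0 : E) 1).exists_forall_le' hf.continuousOn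
    fun x hx => hpos x (ne_zero_of_mem_sphere one_ne_zero ⟨x, hx⟩)
  refine ⟨c, hc, fun x => ?_⟩
  rcases eq_or_ne x 0 with rfl | hx
  · simpa using (hsmul 0 0).symm.le
  · have hnx : ‖x‖ ≠ 0 := norm_ne_zero_iff.mpr hx
    calc c * ‖x‖ ≤ f (‖x‖⁻¹ • x) * ‖x‖ := by
          gcongr
          exact hle _ (by simp [norm_smul, hnx])
      _ = f x := by
          rw [hsmul, abs_of_nonneg (by positivity)]
          field_simp

theorem Matrix.rank_eq_card_width_iff {m n K : Type*} [Fintype m] [Fintype n] [Field K]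
    (A : Matrix m n K) : A.rank = Fintype.card n ↔ ∀ x, A *ᵥ x = 0 → x = 0 := by
  classical
  have hrank := LinearMap.finrank_range_add_finrank_ker A.mulVecLin
  rw [Module.finrank_fintype_fun_eq_card] at hrank
  have hker : (∀ x, A *ᵥ x = 0 → x = 0) ↔ LinearMap.ker A.mulVecLin = ⊥ := by
    simp [LinearMap.ker_eq_bot']
  rw [hker, ← Submodule.finrank_eq_zero, Matrix.rank]
  omega

section StructuredPenalty

variable {p K L : ℕ} (d : Fin K → Fin p → ℝ) (F : Fin L → Matrix (Fin p) (Fin p) ℝ)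

noncomputable def structuredPenalty (β : Fin p → ℝ) : ℝ :=
  (∑ k, |d k ⬝ᵥ β|) + ∑ ℓ, √(β ⬝ᵥ F ℓ *ᵥ β)

def stackedMatrix : Matrix (Fin K ⊕ Fin L × Fin p) (Fin p) ℝ :=
  Matrix.of (Sum.elim d fun li : Fin L × Fin p => F li.1 li.2)

theorem stackedMatrix_mulVec_eq_zero_iff (β : Fin p → ℝ) :
    stackedMatrix d F *ᵥ β = 0 ↔ (∀ k, d k ⬝ᵥ β = 0) ∧ ∀ ℓ, F ℓ *ᵥ β = 0 := by
  simp only [funext_iff, Sum.forall, Prod.forall, Pi.zero_apply]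
  rfl

theorem continuous_structuredPenalty : Continuous (structuredPenalty d F) := by
  unfold structuredPenalty
  fun_prop

theorem structuredPenalty_nonneg (β : Fin p → ℝ) : 0 ≤ structuredPenalty d F β := by
  unfold structuredPenalty
  positivity

theorem structuredPenalty_smul (t : ℝ) (β : Fin p → ℝ) :
    structuredPenalty d F (t • β) = |t| * structuredPenalty d F β := by
  have hquad : ∀ ℓ, √((t • β) ⬝ᵥ F ℓ *ᵥ (t • β)) = |t| * √(β ⬝ᵥ F ℓ *ᵥ β) := fun ℓ => by
    rw [mulVec_smul, dotProduct_smul, smul_dotProduct, smul_eq_mul, smul_eq_mul, ← mul_assoc,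
      ← sq, Real.sqrt_mul (sq_nonneg t), Real.sqrt_sq_eq_abs]
  simp only [structuredPenalty, dotProduct_smul, smul_eq_mul, abs_mul, hquad, ← Finset.mul_sum,
    mul_add]

theorem structuredPenalty_add_of_mulVec_eq_zero (hF : ∀ ℓ, (F ℓ).IsSymm) {v : Fin p → ℝ}
    (hv : stackedMatrix d F *ᵥ v = 0) (β : Fin p → ℝ) :
    structuredPenalty d F (β + v) = structuredPenalty d F β := by
  obtain ⟨hd, hFv⟩ := (stackedMatrix_mulVec_eq_zero_iff d F v).mp hv
  have hquad : ∀ ℓ, (β + v) ⬝ᵥ F ℓ *ᵥ (β + v) = β ⬝ᵥ F ℓ *ᵥ β := fun ℓ => by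
    rw [mulVec_add, hFv, add_zero, add_dotProduct, dotProduct_mulVec v, ← (hF ℓ).eq,
      vecMul_transpose, hFv, zero_dotProduct, add_zero]
  simp only [structuredPenalty, dotProduct_add, hd, add_zero, hquad]

theorem structuredPenalty_eq_zero_iff (hF : ∀ ℓ, (F ℓ).PosSemidef) (β : Fin p → ℝ) :
    structuredPenalty d F β = 0 ↔ stackedMatrix d F *ᵥ β = 0 := by
  have hquad : ∀ ℓ, √(β ⬝ᵥ F ℓ *ᵥ β) = 0 ↔ F ℓ *ᵥ β = 0 := fun ℓ => by
    have hnonneg := (hF ℓ).dotProduct_mulVec_nonneg β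
    have hzero := (hF ℓ).dotProduct_mulVec_zero_iff β
    rw [star_trivial] at hnonneg hzero
    rw [Real.sqrt_eq_zero hnonneg, hzero]
  rw [structuredPenalty, add_eq_zero_iff_of_nonneg (by positivity) (by positivity),
    Finset.sum_eq_zero_iff_of_nonneg (fun _ _ => abs_nonneg _),
    Finset.sum_eq_zero_iff_of_nonneg (fun _ _ => Real.sqrt_nonneg _),
    stackedMatrix_mulVec_eq_zero_iff]
  simp only [Finset.mem_univ, forall_const, abs_eq_zero, hquad]

end StructuredPenalty

/-- The structured sparse kernel is integrable over ℝ^p iff the stacked matrix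
`D̄` (rows `d₁ᵀ,…,d_Kᵀ` followed by the rows of `F₁,…,F_L`) has full column rank `p`. -/
theorem structured_sparse_prior_proper_iff
    (p K L : ℕ) (lam : ℝ) (hlam : 0 < lam)
    (d : Fin K → (Fin p → ℝ))
    (F : Fin L → Matrix (Fin p) (Fin p) ℝ)
    (hFsymm : ∀ ℓ, (F ℓ).IsSymm)
    (hFpsd : ∀ ℓ, (F ℓ).PosSemidef) :
    Integrable (fun β : Fin p → ℝ =>
        Real.exp (-(lam * ((∑ k, |d k ⬝ᵥ β|) +
          ∑ ℓ, Real.sqrt (β ⬝ᵥ (F ℓ) *ᵥ β))))) volume ↔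
      (Matrix.of (Sum.elim d (fun li : Fin L × Fin p => F li.1 li.2))).rank = p := by
  change Integrable (fun β => Real.exp (-(lam * structuredPenalty d F β))) volume ↔
    (stackedMatrix d F).rank = p
  have hcont : Continuous fun β => Real.exp (-(lam * structuredPenalty d F β)) := by
    have := continuous_structuredPenalty d F
    fun_prop
  have hrank : (stackedMatrix d F).rank = p ↔ ∀ x, stackedMatrix d F *ᵥ x = 0 → x = 0 := by
    simpa using (stackedMatrix d F).rank_eq_card_width_iff
  rw [hrank]
  constructor
  · intro hint v hv
    by_contra hv0
    refine not_integrable_of_forall_add_smul_eq volume hcont.continuousAt (Real.exp_pos _).ne'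
      hv0 (fun β t => ?_) hint
    rw [structuredPenalty_add_of_mulVec_eq_zero d F hFsymm (by rw [mulVec_smul, hv, smul_zero])]
  · intro hker
    obtain ⟨c, hc, hle⟩ := exists_pos_mul_norm_le_of_homogeneous
      (continuous_structuredPenalty d F) (structuredPenalty_smul d F) fun β hβ =>
        (structuredPenalty_nonneg d F β).lt_of_ne'
          fun h => hβ (hker β ((structuredPenalty_eq_zero_iff d F hFpsd β).mp h))
    refine (integrable_exp_neg_mul_norm volume (mul_pos hlam hc)).mono hcont.aestronglyMeasurable
      (Filter.Eventually.of_forall fun β => ?_)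
    simp only [Real.norm_of_nonneg (Real.exp_pos _).le, Real.exp_le_exp, neg_le_neg_iff, mul_assoc]
    exact mul_le_mul_of_nonneg_left (hle β) hlam.le
end

section
/- Let λ > 0 and let A be a real m×p matrix with rank(A) < p. Then ∫_{ℝ^p} exp(−λ ‖Aβ‖₁) dβ = ∞, where ‖·‖₁ denotes the ℓ₁ norm on ℝ^m. -/
/-!
The integrand is at least `exp (-λ)` on the open set `{β | ‖A β‖₁ < 1}`, which contains `0`
and is invariant under translation by `ker A`, a nontrivial subspace because `rank A < p`.
Such a set contains, with a small ball `B(0, r)`, the balls `B(n • w, r)`, `n ∈ ℕ`, for any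
`w ∈ ker A` with `‖w‖ = 2 r`; these are pairwise disjoint and of equal positive volume, so the
set has infinite volume.
-/

open MeasureTheory Matrix

open Metric in
theorem addHaar_eq_top_of_forall_add_mem_submodule {E : Type*} [NormedAddCommGroup E]
    [NormedSpace ℝ E] [MeasurableSpace E] [BorelSpace E] (μ : Measure E) [μ.IsAddHaarMeasure]
    {K : Submodule ℝ E} (hK : K ≠ ⊥) {s : Set E} (hs : ∀ x ∈ s, ∀ k ∈ K, x + k ∈ s)
    (hint : (interior s).Nonempty) : μ s = ⊤ := by
  obtain ⟨x, hx⟩ := hint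
  obtain ⟨r, hr, hball⟩ := Metric.mem_nhds_iff.mp (mem_interior_iff_mem_nhds.mp hx)
  obtain ⟨v, hvK, hv⟩ := Submodule.exists_mem_ne_zero_of_ne_bot hK
  obtain ⟨w, hwK, hw⟩ : ∃ w ∈ K, ‖w‖ = 2 * r := by
    refine ⟨(2 * r / ‖v‖) • v, K.smul_mem _ hvK, ?_⟩
    rw [norm_smul, Real.norm_of_nonneg (by positivity),
      div_mul_cancel₀ _ (norm_ne_zero_iff.mpr hv)]
  let B : ℕ → Set E := fun n => ball (x + (n : ℝ) • w) r
  have hdisj : Pairwise (Function.onFun Disjoint B) := by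
    intro n m hnm
    apply ball_disjoint_ball
    rw [dist_eq_norm, add_sub_add_left_eq_sub, ← sub_smul, norm_smul, hw, Real.norm_eq_abs]
    have : (1 : ℝ) ≤ |(n : ℝ) - m| := by
      exact_mod_cast Int.one_le_abs (sub_ne_zero.mpr (Nat.cast_injective.ne hnm : (n : ℤ) ≠ m))
    nlinarith
  have hBs : ∀ n, B n ⊆ s := by
    intro n y hy
    have hy' : y - (n : ℝ) • w ∈ ball x r := by
      rwa [mem_ball, dist_eq_norm, sub_sub, add_comm _ x, ← dist_eq_norm]
    simpa using hs _ (hball hy') _ (K.smul_mem (n : ℝ) hwK)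
  refine top_unique ?_
  calc ⊤ = ∑' n, μ (B n) := by
        simp only [B, Measure.addHaar_ball_center μ _ r]
        exact (ENNReal.tsum_const_eq_top_of_ne_zero (measure_ball_pos μ 0 hr).ne').symm
    _ = μ (⋃ n, B n) := (measure_iUnion hdisj fun _ => measurableSet_ball).symm
    _ ≤ μ s := measure_mono (Set.iUnion_subset hBs)

theorem Matrix.ker_mulVecLin_ne_bot_of_rank_lt {m n R : Type*} [Fintype n] [Field R]
    (A : Matrix m n R) (hA : A.rank < Fintype.card n) : LinearMap.ker A.mulVecLin ≠ ⊥ := by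
  intro hker
  have := LinearMap.finrank_range_of_inj (LinearMap.ker_eq_bot.mp hker)
  rw [Module.finrank_fintype_fun_eq_card] at this
  exact hA.ne this

/-- If `A` is an `m × p` real matrix with rank strictly less than `p`, then for any `λ > 0`
the integral of `exp(−λ‖Aβ‖₁)` over ℝ^p is infinite. -/
theorem lintegral_exp_neg_l1_rank_deficient_eq_top
    (m p : ℕ) (lam : ℝ) (hlam : 0 < lam)
    (A : Matrix (Fin m) (Fin p) ℝ) (hA : A.rank < p) :
    ∫⁻ β : Fin p → ℝ,
      ENNReal.ofReal (Real.exp (-(lam * ∑ i, |(A *ᵥ β) i|))) = ⊤ := by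
  set f : (Fin p → ℝ) → ENNReal :=
    fun β => ENNReal.ofReal (Real.exp (-(lam * ∑ i, |(A *ᵥ β) i|)))
  set c := ENNReal.ofReal (Real.exp (-lam))
  set s := {β : Fin p → ℝ | ∑ i, |(A *ᵥ β) i| < 1}
  have hs_top : volume s = ⊤ := by
    refine addHaar_eq_top_of_forall_add_mem_submodule volume
      (A.ker_mulVecLin_ne_bot_of_rank_lt (by simpa using hA)) (fun β hβ k hk => ?_) ⟨0, ?_⟩
    · have hk : A *ᵥ k = 0 := hk
      simpa [s, mulVec_add, hk] using hβ
    · refine mem_interior_iff_mem_nhds.mpr ((isOpen_lt (f := fun β => ∑ i, |(A *ᵥ β) i|)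
        (by fun_prop) continuous_const).mem_nhds ?_)
      simp
  have hs_sub : s ⊆ {β | c ≤ f β} := by
    intro β (hβ : ∑ i, |(A *ᵥ β) i| < 1)
    apply ENNReal.ofReal_le_ofReal
    simp only [Real.exp_le_exp, neg_le_neg_iff]
    nlinarith
  refine top_unique ?_
  calc ⊤ = c * volume s := by rw [hs_top, ENNReal.mul_top (by simp [c, Real.exp_pos])]
    _ ≤ c * volume {β | c ≤ f β} := by gcongr
    _ ≤ ∫⁻ β, f β := mul_meas_ge_le_lintegral₀ (by fun_prop) _
end

section
/- Let f : ℝ^p → [0,∞] be Lebesgue measurable and suppose there is a nonzero vector v ∈ ℝ^p such that f(β + t·v) = f(β) for all β ∈ ℝ^p and all t ∈ ℝ. If f is not almost everywhere zero (equivalently, ∫_{ℝ^p} f dβ > 0), then ∫_{ℝ^p} f dβ = ∞. -/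
/-!
A functional `L` with `L v = 1` cuts the space into the slabs `L⁻¹' [n, n + 1)`, `n : ℤ`, which
are the translates of one slab by `ℤ • v` and so form a fundamental domain for that action.
By invariance of the measure and periodicity of `f`, every slab carries the same integral, so the
total integral is a constant summed over `ℤ`: it is `0` or `∞`.
-/

open Function Set AddSubgroup MeasureTheory

open scoped ENNReal

theorem MeasureTheory.IsAddFundamentalDomain.lintegral_eq_top_of_vadd_invariant {G α : Type*}
    [AddGroup G] [Countable G] [Infinite G] [AddAction G α] [MeasurableSpace α]
    [MeasurableConstVAdd G α] {μ : Measure α} [VAddInvariantMeasure G α μ] {s : Set α}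
    (hs : IsAddFundamentalDomain G s μ) {f : α → ℝ≥0∞} (hf : ∀ (g : G) x, f (g +ᵥ x) = f x)
    (h0 : ∫⁻ x, f x ∂μ ≠ 0) : ∫⁻ x, f x ∂μ = ∞ := by
  rw [hs.lintegral_eq_tsum''] at h0 ⊢
  simp only [hf] at h0 ⊢
  exact ENNReal.tsum_const_eq_top_of_ne_zero fun hc => h0 (by simp [hc])

section Slab

variable {E : Type*} [AddCommGroup E] {L : E →+ ℝ} {v : E}

theorem infinite_zmultiples_of_map_eq_one (hv : L v = 1) : Infinite (zmultiples v) :=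
  (infinite_zmultiples.2 fun h =>
    not_isOfFinAddOrder_of_isAddTorsionFree one_ne_zero (hv ▸ L.isOfFinAddOrder h)).to_subtype

theorem isAddFundamentalDomain_zmultiples_preimage_Ico [MeasurableSpace E] (hL : Measurable L)
    (hv : L v = 1) (μ : Measure E) :
    IsAddFundamentalDomain (zmultiples v) (L ⁻¹' Ico 0 1) μ := by
  refine .mk' (hL measurableSet_Ico).nullMeasurableSet fun x => ?_
  have hbij : Bijective (codRestrict (fun n : ℤ => n • v) (zmultiples v) _) :=
    (Equiv.ofInjective (fun n : ℤ => n • v) fun m n hmn => by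
      simpa [hv] using congrArg L hmn).bijective
  refine hbij.existsUnique_iff.2 ?_
  change ∃! n : ℤ, L (n • v + x) ∈ Ico 0 1
  simpa [hv, add_comm] using existsUnique_add_zsmul_mem_Ico one_pos (L x) 0

end Slab

theorem Function.Periodic.lintegral_eq_top {E : Type*} [AddCommGroup E] [Module ℝ E]
    [TopologicalSpace E] [SeparatingDual ℝ E] [MeasurableSpace E] [OpensMeasurableSpace E]
    [MeasurableAdd E] {μ : Measure E} [μ.IsAddLeftInvariant] {f : E → ℝ≥0∞} {v : E}
    (hf : Periodic f v) (hv : v ≠ 0) (h0 : ∫⁻ x, f x ∂μ ≠ 0) : ∫⁻ x, f x ∂μ = ∞ := by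
  obtain ⟨L, hL⟩ := SeparatingDual.exists_eq_one (R := ℝ) hv
  have hL' : (L : E →+ ℝ) v = 1 := hL
  have := infinite_zmultiples_of_map_eq_one hL'
  refine (isAddFundamentalDomain_zmultiples_preimage_Ico L.continuous.measurable hL' μ)
    |>.lintegral_eq_top_of_vadd_invariant ?_ h0
  intro g x
  obtain ⟨n, hn⟩ := mem_zmultiples_iff.1 g.2
  rw [AddSubgroup.vadd_def, vadd_eq_add, ← hn, add_comm]
  exact hf.zsmul n x

theorem lintegral_eq_top_of_translation_invariant_direction_general
    (p : ℕ) (f : (Fin p → ℝ) → ENNReal)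
    (v : Fin p → ℝ) (hv : v ≠ 0)
    (hinv : ∀ (β : Fin p → ℝ) (t : ℝ), f (β + t • v) = f β)
    (hpos : 0 < ∫⁻ β : Fin p → ℝ, f β) :
    ∫⁻ β : Fin p → ℝ, f β = ⊤ :=
  Periodic.lintegral_eq_top (fun β => by simpa using hinv β 1) hv hpos.ne'

/-- A nonnegative measurable function on ℝ^p that is invariant along a nonzero direction
and is not almost everywhere zero has infinite Lebesgue integral. -/
theorem lintegral_eq_top_of_translation_invariant_direction
    (p : ℕ) (f : (Fin p → ℝ) → ENNReal) (hf : Measurable f)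
    (v : Fin p → ℝ) (hv : v ≠ 0)
    (hinv : ∀ (β : Fin p → ℝ) (t : ℝ), f (β + t • v) = f β)
    (hpos : 0 < ∫⁻ β : Fin p → ℝ, f β) :
    ∫⁻ β : Fin p → ℝ, f β = ⊤ :=
  lintegral_eq_top_of_translation_invariant_direction_general p f v hv hinv hpos
end

section
/- Let L : ℝ^N → [0,∞) be measurable, let X be a real N×p matrix, let λ > 0, let d₁,…,d_K ∈ ℝ^p, and let F₁,…,F_L be symmetric positive semidefinite real p×p matrices with stacked matrix D̄. Suppose the stacked (N+K+Lp)×p matrix obtained by stacking X on top of D̄ has rank strictly less than p, and suppose ∫_{ℝ^p} L(Xβ) · k(β) dβ > 0, where k is the structured sparse kernel. Then ∫_{ℝ^p} L(Xβ) · k(β) dβ = ∞; i.e., condition (a) of Theorem 2 (full rank of the augmented design) is necessary for posterior propriety. -/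
/-!
A nonzero vector `v` in the kernel of the augmented design leaves `Xβ`, every `dₖᵀβ` and, since
`F_ℓ` is symmetric with `F_ℓ v = 0`, every `βᵀ F_ℓ β` unchanged when `β` moves along `v`. Hence the
integrand is invariant under the transvection `β ↦ β + φ(β) v` with `φ(v) = 1`, whose determinant
is `2`. By the change of variables formula the integral `I` satisfies `I = I / 2`, so `I = ⊤`
as soon as `I > 0`.
-/

open MeasureTheory Matrix

section AddHaar

variable {E : Type*} [NormedAddCommGroup E] [NormedSpace ℝ E] [MeasurableSpace E] [BorelSpace E]
  [FiniteDimensional ℝ E] (μ : Measure E) [μ.IsAddHaarMeasure] {f : E → ENNReal}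

theorem lintegral_eq_top_of_comp_eq {T : E →ₗ[ℝ] E} (hT₀ : LinearMap.det T ≠ 0)
    (hT₁ : |LinearMap.det T| ≠ 1) (hf : ∀ x, f (T x) = f x) (h₀ : ∫⁻ x, f x ∂μ ≠ 0) :
    ∫⁻ x, f x ∂μ = ⊤ := by
  by_contra hfin
  have hinj : Function.Injective T :=
    ((Module.End.isUnit_iff T).1 ((LinearMap.isUnit_iff_isUnit_det T).2 hT₀.isUnit)).1
  have hemb : MeasurableEmbedding T :=
    (LinearMap.isClosedEmbedding_of_injective (LinearMap.ker_eq_bot.2 hinj)).measurableEmbedding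
  have hscale : ∫⁻ x, f x ∂μ = ENNReal.ofReal |(LinearMap.det T)⁻¹| * ∫⁻ x, f x ∂μ :=
    calc ∫⁻ x, f x ∂μ = ∫⁻ x, f (T x) ∂μ := by simp only [hf]
      _ = ∫⁻ x, f x ∂(μ.map T) := (hemb.lintegral_map f).symm
      _ = _ := by
        rw [μ.map_linearMap_addHaar_eq_smul_addHaar hT₀, lintegral_smul_measure, smul_eq_mul]
  have hone := (ENNReal.mul_eq_right h₀ hfin).1 hscale.symm
  rw [abs_inv, ENNReal.ofReal_eq_one, inv_eq_one] at hone
  exact hT₁ hone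

theorem lintegral_eq_top_of_add_smul_eq {v : E} (hv : v ≠ 0)
    (hf : ∀ x (t : ℝ), f (x + t • v) = f x) (h₀ : ∫⁻ x, f x ∂μ ≠ 0) : ∫⁻ x, f x ∂μ = ⊤ := by
  obtain ⟨φ, hφ⟩ := Module.Projective.exists_dual_eq_one ℝ hv
  have hdet : LinearMap.det (LinearMap.transvection φ v) = 2 := by
    rw [LinearMap.transvection.det, hφ]
    norm_num
  exact lintegral_eq_top_of_comp_eq μ (T := LinearMap.transvection φ v) (by simp [hdet])
    (by rw [hdet]; norm_num) (fun x => hf x (φ x)) h₀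

end AddHaar

theorem Matrix.exists_mulVec_eq_zero_of_rank_lt_card_width {m n K : Type*} [Finite m] [Fintype n]
    [Field K] {A : Matrix m n K} (hA : A.rank < Fintype.card n) : ∃ v ≠ 0, A *ᵥ v = 0 := by
  have hrange : Module.finrank K (LinearMap.range A.mulVecLin) < Module.finrank K (n → K) := by
    simpa [Matrix.rank] using hA
  obtain ⟨v, hv, hv0⟩ := (Submodule.ne_bot_iff _).1 <|
    LinearMap.ker_rangeRestrict A.mulVecLin ▸ LinearMap.ker_ne_bot_of_finrank_lt hrange
  exact ⟨v, hv0, hv⟩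

theorem Matrix.IsSymm.dotProduct_mulVec_add_of_mulVec_eq_zero {n R : Type*} [Fintype n]
    [CommSemiring R] {A : Matrix n n R} (hA : A.IsSymm) {w : n → R} (hw : A *ᵥ w = 0)
    (x : n → R) : (x + w) ⬝ᵥ A *ᵥ (x + w) = x ⬝ᵥ A *ᵥ x := by
  rw [mulVec_add, hw, add_zero, add_dotProduct, dotProduct_mulVec w, ← mulVec_transpose, hA.eq,
    hw, zero_dotProduct, add_zero]

section StructuredSparse

variable {ι κ ν m R : Type*} [Fintype ι]

def augmentedDesign (X : Matrix m ι R) (d : κ → ι → R) (F : ν → Matrix ι ι R) :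
    Matrix (m ⊕ κ ⊕ ν × ι) ι R :=
  of (Sum.elim (fun n => X n) (Sum.elim d fun li => F li.1 li.2))

theorem augmentedDesign_mulVec_eq_zero_iff [NonUnitalNonAssocSemiring R] {X : Matrix m ι R}
    {d : κ → ι → R} {F : ν → Matrix ι ι R} {w : ι → R} :
    augmentedDesign X d F *ᵥ w = 0 ↔ X *ᵥ w = 0 ∧ (∀ k, d k ⬝ᵥ w = 0) ∧ ∀ ℓ, F ℓ *ᵥ w = 0 := by
  simp only [funext_iff, Sum.forall, Prod.forall]
  rfl

variable [Fintype κ] [Fintype ν]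

noncomputable def structuredSparseKernel (lam : ℝ) (d : κ → ι → ℝ) (F : ν → Matrix ι ι ℝ)
    (β : ι → ℝ) : ℝ :=
  Real.exp (-(lam * ((∑ k, |d k ⬝ᵥ β|) + ∑ ℓ, Real.sqrt (β ⬝ᵥ F ℓ *ᵥ β))))

noncomputable def posteriorKernel (Lik : (m → ℝ) → ℝ) (X : Matrix m ι ℝ) (lam : ℝ)
    (d : κ → ι → ℝ) (F : ν → Matrix ι ι ℝ) (β : ι → ℝ) : ℝ :=
  Lik (X *ᵥ β) * structuredSparseKernel lam d F β

theorem posteriorKernel_add_of_mulVec_eq_zero {Lik : (m → ℝ) → ℝ} {X : Matrix m ι ℝ} {lam : ℝ}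
    {d : κ → ι → ℝ} {F : ν → Matrix ι ι ℝ} (hF : ∀ ℓ, (F ℓ).IsSymm) {w : ι → ℝ}
    (hw : augmentedDesign X d F *ᵥ w = 0) (β : ι → ℝ) :
    posteriorKernel Lik X lam d F (β + w) = posteriorKernel Lik X lam d F β := by
  obtain ⟨hX, hd, hFw⟩ := augmentedDesign_mulVec_eq_zero_iff.1 hw
  simp only [posteriorKernel, structuredSparseKernel,
    fun ℓ => (hF ℓ).dotProduct_mulVec_add_of_mulVec_eq_zero (hFw ℓ) β]
  simp only [mulVec_add, hX, dotProduct_add, hd, add_zero]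

end StructuredSparse

theorem posterior_improper_of_rank_deficient_augmented_design_general
    (N p K L : ℕ) (Lik : (Fin N → ℝ) → ℝ)
    (X : Matrix (Fin N) (Fin p) ℝ) (lam : ℝ)
    (d : Fin K → (Fin p → ℝ))
    (F : Fin L → Matrix (Fin p) (Fin p) ℝ)
    (hFsymm : ∀ ℓ, (F ℓ).IsSymm)
    (hrank : (Matrix.of (Sum.elim (fun n => X n)
        (Sum.elim d (fun li : Fin L × Fin p => F li.1 li.2)))).rank < p)
    (hpos : 0 < ∫⁻ β : Fin p → ℝ,
        ENNReal.ofReal (Lik (X *ᵥ β) *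
          Real.exp (-(lam * ((∑ k, |d k ⬝ᵥ β|) +
            ∑ ℓ, Real.sqrt (β ⬝ᵥ (F ℓ) *ᵥ β)))))) :
    ∫⁻ β : Fin p → ℝ,
        ENNReal.ofReal (Lik (X *ᵥ β) *
          Real.exp (-(lam * ((∑ k, |d k ⬝ᵥ β|) +
            ∑ ℓ, Real.sqrt (β ⬝ᵥ (F ℓ) *ᵥ β))))) = ⊤ := by
  obtain ⟨v, hv, hMv⟩ := exists_mulVec_eq_zero_of_rank_lt_card_width
    (A := augmentedDesign X d F) (by rw [Fintype.card_fin]; exact hrank)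
  refine lintegral_eq_top_of_add_smul_eq volume hv
    (f := fun β => ENNReal.ofReal (posteriorKernel Lik X lam d F β)) (fun β t => ?_) hpos.ne'
  have htv : augmentedDesign X d F *ᵥ (t • v) = 0 := by rw [mulVec_smul, hMv, smul_zero]
  rw [posteriorKernel_add_of_mulVec_eq_zero hFsymm htv]

/-- Necessity of condition (a): if the augmented design (X stacked on D̄) is rank deficient
and the posterior kernel `L(Xβ)·k(β)` is not a.e. zero, its integral over ℝ^p is infinite. -/
theorem posterior_improper_of_rank_deficient_augmented_design
    (N p K L : ℕ) (Lik : (Fin N → ℝ) → ℝ)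
    (hLik_meas : Measurable Lik) (hLik_nonneg : ∀ η, 0 ≤ Lik η)
    (X : Matrix (Fin N) (Fin p) ℝ) (lam : ℝ) (hlam : 0 < lam)
    (d : Fin K → (Fin p → ℝ))
    (F : Fin L → Matrix (Fin p) (Fin p) ℝ)
    (hFsymm : ∀ ℓ, (F ℓ).IsSymm)
    (hFpsd : ∀ ℓ, (F ℓ).PosSemidef)
    (hrank : (Matrix.of (Sum.elim (fun n => X n)
        (Sum.elim d (fun li : Fin L × Fin p => F li.1 li.2)))).rank < p)
    (hpos : 0 < ∫⁻ β : Fin p → ℝ,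
        ENNReal.ofReal (Lik (X *ᵥ β) *
          Real.exp (-(lam * ((∑ k, |d k ⬝ᵥ β|) +
            ∑ ℓ, Real.sqrt (β ⬝ᵥ (F ℓ) *ᵥ β)))))) :
    ∫⁻ β : Fin p → ℝ,
        ENNReal.ofReal (Lik (X *ᵥ β) *
          Real.exp (-(lam * ((∑ k, |d k ⬝ᵥ β|) +
            ∑ ℓ, Real.sqrt (β ⬝ᵥ (F ℓ) *ᵥ β))))) = ⊤ :=
  posterior_improper_of_rank_deficient_augmented_design_general N p K L Lik X lam d F hFsymm hrank
    hpos
end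

section
/- For every λ > 0 and every z ∈ ℝ, ∫₀^∞ (2πτ)^{−1/2} exp(−z²/(2τ) − λ²τ/2) · (λ²/2) dτ = (λ/2) · exp(−λ|z|). -/
/-!
Substituting `τ = 2 s²` and completing the square turns the left side into
`λ² / √π · exp (-λ|z|) · ∫₀^∞ exp (-(λ s - |z| / (2 s))²) ds`. The Cauchy–Schlömilch integral
`I = ∫₀^∞ exp (-(a s - b / s)²) ds` equals `√π / (2 a)`: the involution `s ↦ b / (a s)` preserves
the integrand, so `∫₀^∞ (b / s²) exp (-(a s - b / s)²) ds = a I`, while `u = a s - b / s` maps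
`(0, ∞)` increasingly onto `ℝ` with `du = (a + b / s²) ds`, whence `2 a I = ∫ exp (-u²) du = √π`.
-/

open MeasureTheory Real Set

section Substitution

variable {E : Type*} [NormedAddCommGroup E] [NormedSpace ℝ E]

theorem integral_comp_mul_sq_Ioi (g : ℝ → E) {c : ℝ} (hc : 0 < c) :
    ∫ x in Ioi 0, (2 * c * x) • g (c * x ^ 2) = ∫ y in Ioi 0, g y := by
  calc ∫ x in Ioi 0, (2 * c * x) • g (c * x ^ 2)
      = c • ∫ x in Ioi 0, (2 * x ^ ((2 : ℝ) - 1)) • g (c * x ^ (2 : ℝ)) := by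
        rw [← integral_smul]
        refine setIntegral_congr_fun measurableSet_Ioi fun x _ => ?_
        norm_num [rpow_two, smul_smul]
        ring_nf
    _ = c • ∫ y in Ioi 0, g (c * y) := by
        rw [integral_comp_rpow_Ioi_of_pos (g := fun y => g (c * y)) two_pos]
    _ = ∫ y in Ioi 0, g y := by simpa using integral_comp_mul_left_Ioi' g 0 hc

theorem integral_comp_div_Ioi (g : ℝ → E) {c : ℝ} (hc : 0 < c) :
    ∫ x in Ioi 0, (c / x ^ 2) • g (c / x) = ∫ y in Ioi 0, g y := by
  have himage : (c / ·) '' Ioi (0 : ℝ) = Ioi 0 := by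
    ext y
    refine ⟨?_, fun hy => ⟨c / y, div_pos hc hy, div_div_cancel₀ hc.ne'⟩⟩
    rintro ⟨x, hx, rfl⟩
    exact div_pos hc hx
  have hderiv : ∀ x ∈ Ioi (0 : ℝ), HasDerivWithinAt (c / ·) (-(c / x ^ 2)) (Ioi 0) x := by
    intro x hx
    simpa [div_eq_mul_inv] using ((hasDerivAt_inv (ne_of_gt hx)).const_mul c).hasDerivWithinAt
  have hinj : InjOn (c / ·) (Ioi (0 : ℝ)) := fun x _ y _ h =>
    inv_injective (mul_left_cancel₀ hc.ne' h)
  have hchange := integral_image_eq_integral_abs_deriv_smul measurableSet_Ioi hderiv hinj g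
  rw [himage] at hchange
  rw [hchange]
  refine setIntegral_congr_fun measurableSet_Ioi fun x hx => ?_
  rw [abs_neg, abs_of_pos (div_pos hc (pow_pos hx 2))]

end Substitution

section CauchySchlomilch

theorem hasDerivAt_mul_sub_div (a b : ℝ) {s : ℝ} (hs : s ≠ 0) :
    HasDerivAt (fun s => a * s - b / s) (a + b / s ^ 2) s :=
  (((hasDerivAt_id' s).const_mul a).sub ((hasDerivAt_inv hs).const_mul b)).congr_deriv (by ring)

variable {a b : ℝ}

theorem strictMonoOn_mul_sub_div (ha : 0 < a) (hb : 0 ≤ b) :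
    StrictMonoOn (fun s => a * s - b / s) (Ioi 0) := fun x hx y _ hxy => by
  have : b / y ≤ b / x := div_le_div_of_nonneg_left hb hx hxy.le
  have : a * x < a * y := mul_lt_mul_of_pos_left hxy ha
  dsimp only
  linarith

theorem image_mul_sub_div_Ioi (ha : 0 < a) (hb : 0 < b) :
    (fun s => a * s - b / s) '' Ioi 0 = univ := by
  refine eq_univ_of_forall fun y => ?_
  -- the positive root of `a * s ^ 2 - y * s - b = 0`
  set D := √(y ^ 2 + 4 * a * b)
  have hD : D ^ 2 = y ^ 2 + 4 * a * b := sq_sqrt (by positivity)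
  have hyD : 0 < y + D := by
    have : |y| < D := by
      rw [← sqrt_sq_eq_abs]
      exact sqrt_lt_sqrt (sq_nonneg y) (by nlinarith)
    linarith [neg_abs_le y]
  refine ⟨(y + D) / (2 * a), mem_Ioi.mpr (by positivity), ?_⟩
  field_simp
  nlinarith

theorem integrableOn_add_div_sq_mul_exp_neg_sq_mul_sub_div (ha : 0 < a) (hb : 0 ≤ b) :
    IntegrableOn (fun s => (a + b / s ^ 2) * exp (-(a * s - b / s) ^ 2)) (Ioi 0) := by
  have h := integrableOn_image_iff_integrableOn_abs_deriv_smul measurableSet_Ioi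
    (fun s hs => (hasDerivAt_mul_sub_div a b (ne_of_gt hs)).hasDerivWithinAt)
    (strictMonoOn_mul_sub_div ha hb).injOn (fun u => exp (-u ^ 2))
  refine (h.mp ?_).congr_fun (fun s (hs : 0 < s) => ?_) measurableSet_Ioi
  · simpa using (integrable_exp_neg_mul_sq one_pos).integrableOn
  · dsimp only
    rw [abs_of_pos (by positivity), smul_eq_mul]

theorem integral_add_div_sq_mul_exp_neg_sq_mul_sub_div (ha : 0 < a) (hb : 0 < b) :
    ∫ s in Ioi 0, (a + b / s ^ 2) * exp (-(a * s - b / s) ^ 2) = √π := by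
  have h := integral_image_eq_integral_abs_deriv_smul measurableSet_Ioi
    (fun s hs => (hasDerivAt_mul_sub_div a b (ne_of_gt hs)).hasDerivWithinAt)
    (strictMonoOn_mul_sub_div ha hb.le).injOn (fun u => exp (-u ^ 2))
  rw [image_mul_sub_div_Ioi ha hb, setIntegral_univ] at h
  rw [setIntegral_congr_fun measurableSet_Ioi (fun s (hs : 0 < s) => ?_), ← h]
  · simpa using integral_gaussian 1
  · rw [abs_of_pos (by positivity), smul_eq_mul]

theorem integrableOn_exp_neg_sq_mul_sub_div (ha : 0 < a) (hb : 0 ≤ b) :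
    IntegrableOn (fun s => exp (-(a * s - b / s) ^ 2)) (Ioi 0) := by
  refine ((integrableOn_add_div_sq_mul_exp_neg_sq_mul_sub_div ha hb).const_mul a⁻¹).mono'
    (by fun_prop) ?_
  filter_upwards [ae_restrict_mem measurableSet_Ioi] with s (hs : 0 < s)
  rw [norm_of_nonneg (exp_pos _).le, ← mul_assoc, ← div_eq_inv_mul]
  have : 1 ≤ (a + b / s ^ 2) / a := by rw [le_div_iff₀ ha]; linarith [div_nonneg hb (sq_nonneg s)]
  nlinarith [exp_pos (-(a * s - b / s) ^ 2)]

theorem integral_div_sq_mul_exp_neg_sq_mul_sub_div (ha : 0 < a) (hb : 0 < b) :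
    ∫ s in Ioi 0, b / s ^ 2 * exp (-(a * s - b / s) ^ 2) =
      a * ∫ s in Ioi 0, exp (-(a * s - b / s) ^ 2) := by
  conv_rhs => rw [← integral_comp_div_Ioi _ (div_pos hb ha), ← integral_const_mul]
  refine setIntegral_congr_fun measurableSet_Ioi fun s (hs : 0 < s) => ?_
  have hinv : a * (b / a / s) - b / (b / a / s) = -(a * s - b / s) := by
    field_simp
    ring
  rw [smul_eq_mul, hinv, neg_sq]
  field_simp

theorem integral_exp_neg_sq_mul_sub_div_Ioi (ha : 0 < a) (hb : 0 ≤ b) :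
    ∫ s in Ioi 0, exp (-(a * s - b / s) ^ 2) = √π / (2 * a) := by
  rcases hb.eq_or_lt with rfl | hb
  · have h := integral_gaussian_Ioi (a ^ 2)
    rw [sqrt_div pi_pos.le, sqrt_sq ha.le] at h
    simp only [zero_div, sub_zero, mul_pow, ← neg_mul, h]
    ring
  · have hsplit : ∫ s in Ioi 0, b / s ^ 2 * exp (-(a * s - b / s) ^ 2) =
        √π - a * ∫ s in Ioi 0, exp (-(a * s - b / s) ^ 2) := by
      rw [← integral_add_div_sq_mul_exp_neg_sq_mul_sub_div ha hb, ← integral_const_mul,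
        ← integral_sub (integrableOn_add_div_sq_mul_exp_neg_sq_mul_sub_div ha hb.le)
          ((integrableOn_exp_neg_sq_mul_sub_div ha hb.le).const_mul a)]
      simp only [add_mul, add_sub_cancel_left]
    rw [integral_div_sq_mul_exp_neg_sq_mul_sub_div ha hb] at hsplit
    rw [eq_div_iff (by positivity)]
    linarith

end CauchySchlomilch

/-- The Andrews–Mallows scale-mixture identity: a mean-zero normal with variance τ mixed
over an Exponential(λ²/2) distribution on τ has a Laplace(λ) marginal. -/
theorem andrews_mallows_identity (lam z : ℝ) (hlam : 0 < lam) :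
    ∫ τ in Set.Ioi (0 : ℝ),
        (Real.sqrt (2 * Real.pi * τ))⁻¹ *
          Real.exp (-(z ^ 2 / (2 * τ)) - lam ^ 2 * τ / 2) * (lam ^ 2 / 2) =
      (lam / 2) * Real.exp (-(lam * |z|)) := by
  have hintegrand : ∀ s ∈ Ioi (0 : ℝ), (2 * 2 * s) • ((√(2 * π * (2 * s ^ 2)))⁻¹ *
      exp (-(z ^ 2 / (2 * (2 * s ^ 2))) - lam ^ 2 * (2 * s ^ 2) / 2) * (lam ^ 2 / 2)) =
      lam ^ 2 / √π * exp (-(lam * |z|)) * exp (-(lam * s - |z| / 2 / s) ^ 2) := by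
    intro s (hs : 0 < s)
    have hsqrt : √(2 * π * (2 * s ^ 2)) = 2 * s * √π := by
      rw [show 2 * π * (2 * s ^ 2) = (2 * s) ^ 2 * π by ring, sqrt_mul (sq_nonneg _),
        sqrt_sq (by positivity)]
    have hexponent : -(z ^ 2 / (2 * (2 * s ^ 2))) - lam ^ 2 * (2 * s ^ 2) / 2 =
        -(lam * |z|) + -(lam * s - |z| / 2 / s) ^ 2 := by
      field_simp
      rw [← sq_abs z]
      ring
    rw [hsqrt, hexponent, exp_add, smul_eq_mul]
    field_simp
  rw [← integral_comp_mul_sq_Ioi _ two_pos, setIntegral_congr_fun measurableSet_Ioi hintegrand,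
    integral_const_mul, integral_exp_neg_sq_mul_sub_div_Ioi hlam (by positivity)]
  field_simp
end
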